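/- arXiv:2603.05567 — 3 statements merged into one kernel-verified Lean document; each statement's English description precedes it below -/
import Mathlib

section
/- Let n, m ≥ 1, let P : Fin m → E be pocket coordinates, X : Fin n → E ligand coordinates, N : Fin n → Finset (Fin n ⊕ Fin m) an arbitrary neighbor assignment, and φ : ℝ → ℝ an arbitrary function. Then for every rigid motion g : E ≃ᵃⁱ[ℝ] E, applying g jointly to the pocket and ligand coordinates commutes with the coordinate update: for every u, F(g ∘ P, g ∘ X) u = g (F(P, X) u). (This is the SE(3)-equivariance of the EGNN-style coordinate update of Eq. (7): the scalar coefficient depends only on interatomic distances, which are preserved by g, and the relative displacement vectors transform by the linear part of g.) -/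
noncomputable section

open Finset

/-- 3-dimensional Euclidean space. -/
abbrev E : Type := EuclideanSpace ℝ (Fin 3)

/-- Positions of all atoms: ligand atoms (left) and pocket atoms (right). -/
def pos {n m : ℕ} (P : Fin m → E) (X : Fin n → E) : Fin n ⊕ Fin m → E :=
  Sum.elim X P

/-- The pocket-conditioned EGNN-style coordinate update (Eq. (7)):
`F(P, X) u = X u + ∑_{w ∈ N u} (φ (dist (X u) (pos w)) / (dist (X u) (pos w))^2) • (X u − pos w)`,
with the convention that division by zero equals zero. -/
def coordUpdate {n m : ℕ} (P : Fin m → E) (X : Fin n → E)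
    (N : Fin n → Finset (Fin n ⊕ Fin m)) (φ : ℝ → ℝ) (u : Fin n) : E :=
  X u + ∑ w ∈ N u,
    (φ (dist (X u) (pos P X w)) / (dist (X u) (pos P X w)) ^ 2) • (X u - pos P X w)

theorem AffineMap.map_add_sum_smul_sub {k V W ι : Type*} [Ring k] [AddCommGroup V] [Module k V]
    [AddCommGroup W] [Module k W] (f : V →ᵃ[k] W) (x : V) (s : Finset ι) (c : ι → k)
    (y : ι → V) :
    f (x + ∑ i ∈ s, c i • (x - y i)) = f x + ∑ i ∈ s, c i • (f x - f (y i)) := by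
  have hsub (i : ι) : f.linear (x - y i) = f x - f (y i) := f.linearMap_vsub x (y i)
  calc f (x + ∑ i ∈ s, c i • (x - y i))
      = f.linear (∑ i ∈ s, c i • (x - y i)) + f x := by
        rw [add_comm]; exact f.map_vadd x _
    _ = f x + ∑ i ∈ s, c i • (f x - f (y i)) := by
        simp only [map_sum, map_smul, hsub, add_comm]

theorem pos_comp {n m : ℕ} (g : E → E) (P : Fin m → E) (X : Fin n → E) :
    pos (g ∘ P) (g ∘ X) = g ∘ pos P X :=
  (Sum.comp_elim g X P).symm

theorem coordUpdate_equivariant_general {n m : ℕ}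
    (P : Fin m → E) (X : Fin n → E) (N : Fin n → Finset (Fin n ⊕ Fin m))
    (φ : ℝ → ℝ) (g : E ≃ᵃⁱ[ℝ] E) (u : Fin n) :
    coordUpdate (g ∘ P) (g ∘ X) N φ u = g (coordUpdate P X N φ u) := by
  -- the coefficients only see distances, which `g` preserves; what is left is affine in the positions
  simp only [coordUpdate, pos_comp, Function.comp_apply, g.dist_map]
  exact (g.toAffineEquiv.toAffineMap.map_add_sum_smul_sub _ _ _ _).symm

/-- SE(3)-equivariance of the coordinate update: applying a rigid motion `g` jointly to
pocket and ligand coordinates commutes with the update. -/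
theorem coordUpdate_equivariant {n m : ℕ} (hn : 1 ≤ n) (hm : 1 ≤ m)
    (P : Fin m → E) (X : Fin n → E) (N : Fin n → Finset (Fin n ⊕ Fin m))
    (φ : ℝ → ℝ) (g : E ≃ᵃⁱ[ℝ] E) (u : Fin n) :
    coordUpdate (g ∘ P) (g ∘ X) N φ u = g (coordUpdate P X N φ u) :=
  coordUpdate_equivariant_general P X N φ g u
end
end

section
/- Let x : ℝ and let a, b : ℝ≥0 with a ≤ 1 and b ≤ 1. Then composing two Gaussian forward-diffusion transitions yields the Gaussian forward marginal with multiplied signal coefficients: (gaussianReal (Real.sqrt a * x) (1 − a)).bind (fun y => gaussianReal (Real.sqrt b * y) (1 − b)) = gaussianReal (Real.sqrt (a * b) * x) (1 − a * b), where 1 − a, 1 − b, 1 − a*b are the (ℝ≥0) variances. -/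
/-!
The kernel `y ↦ N(c y, v₂)` is `N(0, v₂)` translated by `c y`, so binding it against `μ` gives
the convolution of the pushforward of `μ` under `y ↦ c y` with `N(0, v₂)`. For `μ = N(m, v₁)`
the pushforward is `N(c m, c² v₁)`, and Gaussians convolve to `N(c m, c² v₁ + v₂)`. With
`c = √b`, `v₁ = 1 - a`, `v₂ = 1 - b` the variance is `b (1 - a) + (1 - b) = 1 - a b`, checked in `ℝ`
since `a, b ≤ 1` make the truncated subtractions of `ℝ≥0` exact.
-/

open MeasureTheory ProbabilityTheory

open scoped NNReal

namespace MeasureTheory.Measure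

variable {α M : Type*} [MeasurableSpace α] [AddMonoid M] [MeasurableSpace M] [MeasurableAdd₂ M]

theorem measurable_map_const_add (ν : Measure M) [SFinite ν] :
    Measurable fun y : M => ν.map (y + ·) := by
  refine measurable_of_measurable_coe _ fun s hs => ?_
  simp_rw [map_apply (measurable_const_add _) hs]
  exact measurable_measure_prodMk_left (measurable_add hs)

theorem bind_map_const_add (μ : Measure α) (ν : Measure M) [SFinite ν] {f : α → M}
    (hf : Measurable f) : μ.bind (fun y => ν.map (f y + ·)) = μ.map f ∗ ν := by
  ext s hs
  rw [bind_apply hs (by exact ((measurable_map_const_add ν).comp hf).aemeasurable), conv,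
    map_apply measurable_add hs, prod_apply (measurable_add hs), lintegral_map _ hf]
  · simp_rw [map_apply (measurable_const_add _) hs]
    rfl
  · exact measurable_measure_prodMk_left (measurable_add hs)

end MeasureTheory.Measure

namespace ProbabilityTheory

theorem gaussianReal_bind_gaussianReal_const_mul (m c : ℝ) (v₁ v₂ : ℝ≥0) :
    (gaussianReal m v₁).bind (fun y => gaussianReal (c * y) v₂) =
      gaussianReal (c * m) (.mk (c ^ 2) (sq_nonneg c) * v₁ + v₂) := by
  have h_translate (y : ℝ) : gaussianReal (c * y) v₂ = (gaussianReal 0 v₂).map (c * y + ·) := by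
    rw [gaussianReal_map_const_add, zero_add]
  simp_rw [h_translate]
  rw [Measure.bind_map_const_add _ _ (measurable_const_mul c), gaussianReal_map_const_mul,
    gaussianReal_conv_gaussianReal, add_zero]

end ProbabilityTheory

/-- Composing two Gaussian forward-diffusion transitions yields the Gaussian forward
marginal with multiplied signal coefficients:
`N(√a x, 1 − a)` followed by `y ↦ N(√b y, 1 − b)` equals `N(√(ab) x, 1 − ab)`. -/
theorem gaussian_forward_compose (x : ℝ) (a b : ℝ≥0) (ha : a ≤ 1) (hb : b ≤ 1) :
    (gaussianReal (Real.sqrt a * x) (1 - a)).bind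
      (fun y => gaussianReal (Real.sqrt b * y) (1 - b)) =
    gaussianReal (Real.sqrt (a * b) * x) (1 - a * b) := by
  have h_mean : Real.sqrt b * (Real.sqrt a * x) = Real.sqrt (a * b) * x := by
    rw [Real.sqrt_mul a.coe_nonneg]
    ring
  have h_var : (.mk (Real.sqrt b ^ 2) (sq_nonneg _) * (1 - a) + (1 - b) : ℝ≥0) = 1 - a * b := by
    apply NNReal.coe_injective
    rw [NNReal.coe_add, NNReal.coe_mul, NNReal.coe_mk, Real.sq_sqrt b.coe_nonneg,
      NNReal.coe_sub ha, NNReal.coe_sub hb, NNReal.coe_sub (mul_le_one' ha hb)]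
    push_cast
    ring
  rw [gaussianReal_bind_gaussianReal_const_mul, h_mean, h_var]
end

section
/- Let α be a measurable space, π a probability measure on α, x : α, and a, b : ℝ≥0∞ with a ≤ 1 and b ≤ 1. Define the absorbing-mixture kernel K_c(y) := c • Measure.dirac y + (1 − c) • π for c : ℝ≥0∞. Then composing two such transitions multiplies the retention coefficients: (K_a x).bind K_b = (a * b) • Measure.dirac x + (1 − a * b) • π. -/
/-!
Binding any measure `μ` through `K_c` keeps the fraction `c` of `μ` and sends the rest of its
mass to `π`: `μ.bind K_c = c • μ + ((1 - c) * μ univ) • π`. Applied to the probability measure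
`μ = K_a x`, this gives `b • (a • δ_x + (1 - a) • π) + (1 - b) • π`, and the coefficient of `π`
is `b (1 - a) + (1 - b) = 1 - a b`.
-/

open MeasureTheory

open scoped ENNReal

/-- The absorbing-mixture transition kernel of the categorical forward diffusion:
`K_c(y) = c • δ_y + (1 − c) • π`. -/
noncomputable def mixKernel {α : Type*} [MeasurableSpace α] (π : Measure α)
    (c : ℝ≥0∞) (y : α) : Measure α :=
  c • Measure.dirac y + (1 - c) • π

namespace ENNReal

lemma mul_one_sub_add_one_sub {a b : ℝ≥0∞} (ha : a ≤ 1) (hb : b ≤ 1) :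
    b * (1 - a) + (1 - b) = 1 - a * b := by
  have hab : a * b ≤ b := mul_le_of_le_one_left' ha
  rw [ENNReal.mul_sub fun _ _ => ne_top_of_le_ne_top one_ne_top hb, mul_one, mul_comm,
    add_comm, tsub_add_tsub_cancel hb hab]

end ENNReal

section MixKernel

variable {α : Type*} [MeasurableSpace α]

lemma mixKernel_apply (π : Measure α) (c : ℝ≥0∞) (y : α) {s : Set α} (hs : MeasurableSet s) :
    mixKernel π c y s = c * s.indicator 1 y + (1 - c) * π s := by
  simp [mixKernel, Measure.dirac_apply' _ hs]

lemma mixKernel_apply_univ (π : Measure α) [IsProbabilityMeasure π] {c : ℝ≥0∞} (hc : c ≤ 1)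
    (y : α) : mixKernel π c y Set.univ = 1 := by
  simp [mixKernel_apply π c y MeasurableSet.univ, add_tsub_cancel_of_le hc]

lemma measurable_mixKernel (π : Measure α) (c : ℝ≥0∞) : Measurable (mixKernel π c) := by
  refine Measure.measurable_of_measurable_coe _ fun s hs => ?_
  simp only [mixKernel_apply π c _ hs]
  exact ((measurable_one.indicator hs).const_mul c).add_const _

lemma bind_mixKernel (μ π : Measure α) (c : ℝ≥0∞) :
    μ.bind (mixKernel π c) = c • μ + ((1 - c) * μ Set.univ) • π := by
  ext s hs
  rw [Measure.bind_apply hs (measurable_mixKernel π c).aemeasurable]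
  simp only [mixKernel_apply π c _ hs, Measure.add_apply, Measure.smul_apply, smul_eq_mul]
  rw [lintegral_add_right _ measurable_const, lintegral_const_mul _ (measurable_one.indicator hs),
    lintegral_indicator_one hs, lintegral_const]
  ring

end MixKernel

/-- Composing two absorbing-mixture transitions multiplies the retention coefficients:
`(K_a x).bind K_b = (a * b) • δ_x + (1 − a * b) • π`. -/
theorem mixKernel_bind_mixKernel {α : Type*} [MeasurableSpace α]
    (π : Measure α) [IsProbabilityMeasure π] (x : α)
    (a b : ℝ≥0∞) (ha : a ≤ 1) (hb : b ≤ 1) :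
    (mixKernel π a x).bind (mixKernel π b) =
      (a * b) • Measure.dirac x + (1 - a * b) • π := by
  rw [bind_mixKernel, mixKernel_apply_univ π ha, mul_one, mixKernel, smul_add, smul_smul,
    smul_smul, add_assoc, ← add_smul, ENNReal.mul_one_sub_add_one_sub ha hb, mul_comm b a]
end
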